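/- Let i, j, k be positive integers with i ≤ j < k. Let A be a traversal path starting at some index ≤ i, passing through j, and continuing to some index ≥ k. Let B_adv be a traversal path starting at some index ≤ i and containing k, and let B_proof be the greedy traversal from i to k. Then there exists an element m in [j, k] common to A, B_adv, and B_proof. -/

import Mathlib

/-- A single skip-list hop: `b = a + 2 ^ l` for some level `l` with `2 ^ l ∣ a`. -/
def isHop (a b : ℕ) : Prop := ∃ l : ℕ, 2 ^ l ∣ a ∧ b = a + 2 ^ l

/-- A valid traversal path. -/
def IsPath (P : List ℕ) : Prop := P.Chain' isHop

/-- The greedy hop level at element `j` towards destination `n`. -/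
def hopLevel (j n : ℕ) : ℕ :=
  Nat.findGreatest (fun l => 2 ^ l ∣ j ∧ j + 2 ^ l ≤ n) n

/-- The greedy skip-list traversal from `j` to `n`, computed with explicit fuel. -/
def greedyAux : ℕ → ℕ → ℕ → List ℕ
  | 0, j, _ => [j]
  | fuel + 1, j, n => if j < n then j :: greedyAux fuel (j + 2 ^ hopLevel j n) n else [j]

/-- The greedy skip-list traversal path from `i` to `n`. -/
def greedy (i n : ℕ) : List ℕ := greedyAux (n - i) i n

lemma isHop_lt {a b : ℕ} (h : isHop a b) : a < b := by
  obtain ⟨l, _, rfl⟩ := h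
  have := pow_pos (by norm_num : (0:ℕ) < 2) l
  omega

lemma path_head_lt {a : ℕ} {rest : List ℕ} (hP : IsPath (a :: rest)) {x : ℕ}
    (hx : x ∈ rest) : a < x := by
  have hlt : (a :: rest).Chain' (· < ·) := List.IsChain.imp (fun _ _ h => isHop_lt h) hP
  have hpw := (List.isChain_iff_pairwise).mp hlt
  exact (List.pairwise_cons.mp hpw).1 x hx

lemma path_head_le {P : List ℕ} (hP : IsPath P) {p x : ℕ}
    (hp : P.head? = some p) (hx : x ∈ P) : p ≤ x := by
  cases P with
  | nil => simp at hp
  | cons a rest =>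
    simp at hp; subst hp
    cases hx with
    | head => exact le_refl _
    | tail _ hx => exact le_of_lt (path_head_lt hP hx)

def Blocking (m k : ℕ) : Prop := m = k ∨ ∃ l : ℕ, 2 ^ l ∣ m ∧ k < m + 2 ^ l

lemma exists_block (k : ℕ) : ∀ (A : List ℕ) (j : ℕ), IsPath A → j ∈ A → j ≤ k →
    (∃ a ∈ A, k ≤ a) → ∃ m ∈ A, j ≤ m ∧ m ≤ k ∧ Blocking m k := by
  intro A
  induction A with
  | nil => intro j _ hj; simp at hj
  | cons a rest ih =>
    intro j hA hj hjk hend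
    cases hj with
    | head =>
      rcases eq_or_lt_of_le hjk with rfl | hlt
      · exact ⟨a, List.mem_cons_self, le_refl _, le_refl _, Or.inl rfl⟩
      · obtain ⟨x, hx, hkx⟩ := hend
        cases hx with
        | head => omega
        | tail _ hx =>
          cases rest with
          | nil => cases hx
          | cons b rest' =>
            have hhop : isHop a b := (List.isChain_cons_cons.mp hA).1
            obtain ⟨l, hdvd, hb⟩ := hhop
            by_cases hbk : b ≤ k
            · obtain ⟨m, hm, hbm, hmk, hblock⟩ := ih b (List.isChain_cons_cons.mp hA).2
                (List.mem_cons_self) hbk ⟨x, hx, hkx⟩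
              have : a ≤ b := by have := pow_pos (by norm_num : (0:ℕ) < 2) l; omega
              exact ⟨m, List.mem_cons_of_mem _ hm, by omega, hmk, hblock⟩
            · exact ⟨a, List.mem_cons_self, le_refl _, le_of_lt hlt,
                Or.inr ⟨l, hdvd, by omega⟩⟩
    | tail _ hj =>
      have ha : a < j := path_head_lt hA hj
      obtain ⟨x, hx, hkx⟩ := hend
      have hx' : x ∈ rest := by
        cases hx with
        | head => omega
        | tail _ h => exact h
      obtain ⟨m, hm, hjm, hmk, hblock⟩ := ih j hA.tail hj hjk ⟨x, hx', hkx⟩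
      exact ⟨m, List.mem_cons_of_mem _ hm, hjm, hmk, hblock⟩

lemma mem_of_block {m k : ℕ} (hmk : m ≤ k) (hblock : Blocking m k) :
    ∀ (P : List ℕ) (p : ℕ), IsPath P → P.head? = some p → p ≤ m → k ∈ P → m ∈ P := by
  intro P
  induction P with
  | nil => intro p _ hp; simp at hp
  | cons a rest ih =>
    intro p hP hp hpm hk
    simp at hp; subst hp
    rcases eq_or_lt_of_le hpm with rfl | ham
    · exact List.mem_cons_self
    · have hk' : k ∈ rest := by
        cases hk with
        | head => omega
        | tail _ h => exact h
      cases rest with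
      | nil => simp at hk'
      | cons b rest' =>
        have hhop : isHop a b := (List.isChain_cons_cons.mp hP).1
        obtain ⟨h, hdvd, hb⟩ := hhop
        have hrest : IsPath (b :: rest') := (List.isChain_cons_cons.mp hP).2
        by_cases hbm : b ≤ m
        · exact List.mem_cons_of_mem _ (ih b hrest rfl hbm hk')
        · push_neg at hbm
          exfalso
          have hkb : b ≤ k := path_head_le hrest rfl hk'
          rcases hblock with rfl | ⟨l, hl, hml⟩
          · omega
          · by_cases hhl : h < l
            · have h2 : (2:ℕ) ^ h ∣ m := dvd_trans (pow_dvd_pow 2 (le_of_lt hhl)) hl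
              have hd : (2:ℕ)^h ∣ m - a := Nat.dvd_sub h2 hdvd
              have hpos : 0 < m - a := by omega
              have := Nat.le_of_dvd hpos hd
              omega
            · push_neg at hhl
              have h2 : (2:ℕ) ^ l ∣ b := by
                rw [hb]
                exact dvd_add (dvd_trans (pow_dvd_pow 2 hhl) hdvd) (pow_dvd_pow 2 hhl)
              have hd : (2:ℕ)^l ∣ b - m := Nat.dvd_sub h2 hl
              have hpos : 0 < b - m := by omega
              have := Nat.le_of_dvd hpos hd
              omega

lemma hopLevel_spec {j n : ℕ} (h : j < n) :
    2 ^ hopLevel j n ∣ j ∧ j + 2 ^ hopLevel j n ≤ n := by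
  have h0 : 2 ^ 0 ∣ j ∧ j + 2 ^ 0 ≤ n := by
    simp only [pow_zero]
    exact ⟨one_dvd _, by omega⟩
  exact Nat.findGreatest_spec (P := fun l => 2 ^ l ∣ j ∧ j + 2 ^ l ≤ n) (Nat.zero_le n) h0

lemma greedyAux_head (fuel j n : ℕ) : (greedyAux fuel j n).head? = some j := by
  cases fuel with
  | zero => rfl
  | succ f => simp only [greedyAux]; split <;> rfl

lemma greedyAux_path (n : ℕ) : ∀ fuel j, IsPath (greedyAux fuel j n) := by
  intro fuel
  induction fuel with
  | zero => intro j; simp [greedyAux, IsPath, List.Chain', List.isChain_singleton]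
  | succ f ihf =>
    intro j
    simp only [greedyAux]
    split
    · rename_i hjn
      rw [IsPath, List.Chain', List.isChain_cons]
      refine ⟨?_, ihf _⟩
      intro y hy
      rw [greedyAux_head] at hy
      cases hy
      exact ⟨hopLevel j n, (hopLevel_spec hjn).1, rfl⟩
    · simp [IsPath, List.Chain', List.isChain_singleton]

lemma mem_greedyAux (n : ℕ) : ∀ fuel j, j ≤ n → n ≤ j + fuel → n ∈ greedyAux fuel j n := by
  intro fuel
  induction fuel with
  | zero => intro j h1 h2; have : j = n := by omega
            subst this; simp [greedyAux]
  | succ f ihf =>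
    intro j h1 h2
    simp only [greedyAux]
    split
    · rename_i hjn
      have hs := hopLevel_spec hjn
      have hp := pow_pos (by norm_num : (0:ℕ) < 2) (hopLevel j n)
      exact List.mem_cons_of_mem _ (ihf _ hs.2 (by omega))
    · rename_i hjn
      have : j = n := by omega
      subst this; simp


/-- Three-way common element: if `A` is a traversal path starting at or before `i`,
passing through `j` and continuing to `k` or beyond, `B` is a traversal path starting at
or before `i` and containing `k`, then `A`, `B`, and the greedy traversal from `i` to `k`
share a common element `m ∈ [j, k]`. -/
theorem stmt12 (i j k : ℕ) (hi : 0 < i) (hij : i ≤ j) (hjk : j < k)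
    (A B : List ℕ) (hA : IsPath A) (hB : IsPath B)
    (hAstart : ∃ a, A.head? = some a ∧ a ≤ i) (hjA : j ∈ A) (hAend : ∃ a ∈ A, k ≤ a)
    (hBstart : ∃ b, B.head? = some b ∧ b ≤ i) (hkB : k ∈ B) :
    ∃ m : ℕ, j ≤ m ∧ m ≤ k ∧ m ∈ A ∧ m ∈ B ∧ m ∈ greedy i k := by
  obtain ⟨m, hmA, hjm, hmk, hblock⟩ := exists_block k A j hA hjA (le_of_lt hjk) hAend
  obtain ⟨b, hbhead, hbi⟩ := hBstart
  have hmB : m ∈ B := mem_of_block hmk hblock B b hB hbhead (by omega) hkB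
  have hkG : k ∈ greedy i k := mem_greedyAux k (k - i) i (by omega) (by omega)
  have hmG : m ∈ greedy i k :=
    mem_of_block hmk hblock (greedy i k) i (greedyAux_path k _ i)
      (greedyAux_head _ _ _) (by omega) hkG
  exact ⟨m, hjm, hmk, hmA, hmB, hmG⟩
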